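/- Let Q be a set with binary operations · , \ and / such that for all x, y in Q: (y/x)·x = y, (y·x)/x = y, x/(y\x) = y, and (x/y)\x = y. Then all six quasigroup identities hold in Q; in particular, x·(x\y) = y and x\(x·y) = y for all x, y in Q (so (Q, ·, \, /) is an equational quasigroup). -/

import Mathlib

section

variable {Q : Type*} (mul ld rd : Q → Q → Q)

theorem mul_ld_cancel_of_C_T (hC : ∀ x y, mul (rd y x) x = y)
    (hT : ∀ x y, rd x (ld y x) = y) (x y : Q) : mul x (ld x y) = y := by
  simpa only [hT y x] using hC (ld x y) y

theorem ld_mul_cancel_of_D_R (hD : ∀ x y, rd (mul y x) x = y)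
    (hR : ∀ x y, ld (rd x y) x = y) (x y : Q) : ld x (mul x y) = y := by
  simpa only [hD y x] using hR (mul x y) y

end

/-- An algebra (Q, ·, \, /) satisfying the given identities satisfies all six
Birkhoff quasigroup identities (A), (C), (B), (D), (T), (R), i.e. it is an
equational quasigroup. -/
theorem quasigroup_of_CDTR {Q : Type*} (mul ld rd : Q → Q → Q)
    (hC : ∀ x y, mul (rd y x) x = y)
    (hD : ∀ x y, rd (mul y x) x = y)
    (hT : ∀ x y, rd x (ld y x) = y)
    (hR : ∀ x y, ld (rd x y) x = y) :
    (∀ x y, mul x (ld x y) = y) ∧ (∀ x y, mul (rd y x) x = y) ∧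
    (∀ x y, ld x (mul x y) = y) ∧ (∀ x y, rd (mul y x) x = y) ∧
    (∀ x y, rd x (ld y x) = y) ∧ (∀ x y, ld (rd x y) x = y) :=
  ⟨mul_ld_cancel_of_C_T mul ld rd hC hT, hC, ld_mul_cancel_of_D_R mul ld rd hD hR, hD, hT, hR⟩
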